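/- arXiv:2109.11990 — 4 statements merged into one kernel-verified Lean document; each statement's English description precedes it below -/
import Mathlib

section
/- Under the linear SEM y = β^T x + ε with E[ε]=0 and x_S ⊥ ε (S the support of β) and W = E[x x^T] positive definite, the causal coefficient β satisfies ‖∇R(β) ∘ β‖₂ = 0, where R(α) = E[(1/2)(α^T x − y)^2] and ∘ denotes the Hadamard (componentwise) product. In particular β is a global minimizer of α ↦ ‖∇R(α) ∘ α‖₂. -/
/-!
Expanding the square around `β` gives `R(α) = ½ (α - β)ᵀ W (α - β) - (α - β)ᵀ E[x ε] + ½ E[ε²]`,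
so `∇R(β) = -E[x ε]`. For `j ∈ S` independence and `E[ε] = 0` give `E[x_j ε] = 0`, and for
`j ∉ S` the factor `β_j` vanishes; hence `∇R(β) ∘ β = 0`.

The product formula `E[x_j ε] = E[x_j] E[ε]` needs `x_j` and `ε` to be a.e. measurable, and
independence provides this once `x_j ε`, `|x_j|` and `|ε|` are (the case `x_j = 0` a.e. being
trivial). On `A = {x_j > 0}` (or `{x_j < 0}`), say non-null, the events `{ε > 0}` and
`{x_j ε > 0}` agree; the latter is null-measurable, so it splits `A` additively, and independence
turns `μ A = μ (A ∩ {ε > 0}) + μ (A ∩ {ε ≤ 0})` into `μ {ε > 0} + μ {ε ≤ 0} = 1`, which makes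
`{ε > 0}` null-measurable. Together with `{ε < 0}` and `|ε|` this rebuilds `ε`.
-/

open MeasureTheory ProbabilityTheory Set RealInnerProductSpace

section

variable {Ω : Type*} [MeasurableSpace Ω] {μ : Measure Ω}

lemma MeasureTheory.nullMeasurableSet_of_measure_add_measure_compl [IsFiniteMeasure μ]
    {s : Set Ω} (h : μ s + μ sᶜ = μ univ) : NullMeasurableSet s μ := by
  set u := toMeasurable μ s
  set v := toMeasurable μ sᶜ
  have huv : u ∪ v = univ :=
    eq_univ_of_forall fun ω => (em (ω ∈ s)).imp (subset_toMeasurable μ s ·)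
      (subset_toMeasurable μ sᶜ ·)
  have hnull : μ (u ∩ v) = 0 := by
    have := measure_union_add_inter (μ := μ) u (measurableSet_toMeasurable μ sᶜ)
    rw [huv, measure_toMeasurable, measure_toMeasurable, h] at this
    simpa [measure_ne_top μ univ] using this
  refine (measurableSet_toMeasurable μ s).nullMeasurableSet.congr ?_
  rw [ae_eq_set]
  refine ⟨?_, ?_⟩
  · refine measure_mono_null (fun ω hω => ?_) hnull
    exact ⟨hω.1, subset_toMeasurable μ sᶜ hω.2⟩
  · simp [sdiff_eq_empty.2 (subset_toMeasurable μ s)]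

variable [IsProbabilityMeasure μ]

lemma MeasureTheory.NullMeasurableSet.of_inter_eq_inter {A s t : Set Ω}
    (ht : NullMeasurableSet t μ) (hA : μ A ≠ 0) (hs : μ (A ∩ s) = μ A * μ s)
    (hsc : μ (A ∩ sᶜ) = μ A * μ sᶜ) (hst : A ∩ t = A ∩ s) : NullMeasurableSet s μ := by
  have hdiff : A \ t = A ∩ sᶜ := by
    rw [← sdiff_self_inter, hst, sdiff_self_inter, sdiff_eq]
  have hsplit := measure_inter_add_sdiff₀ A ht
  rw [hst, hdiff, hs, hsc, ← mul_add] at hsplit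
  refine nullMeasurableSet_of_measure_add_measure_compl ?_
  rw [measure_univ]
  exact (ENNReal.mul_eq_left hA (measure_ne_top μ A)).1 hsplit

variable {X Y : Ω → ℝ}

lemma ProbabilityTheory.IndepFun.nullMeasurableSet_pos_of_mul (h : IndepFun X Y μ)
    (hXY : AEMeasurable (fun ω => X ω * Y ω) μ) (hX : μ (X ⁻¹' Ioi 0) ≠ 0) :
    NullMeasurableSet (Y ⁻¹' Ioi 0) μ := by
  refine (hXY.nullMeasurable (measurableSet_Ioi (a := 0))).of_inter_eq_inter hX
    (h.measure_inter_preimage_eq_mul (Ioi 0) (Ioi 0) measurableSet_Ioi measurableSet_Ioi) ?_ ?_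
  · rw [← preimage_compl, compl_Ioi]
    exact h.measure_inter_preimage_eq_mul (Ioi 0) (Iic 0) measurableSet_Ioi measurableSet_Iic
  · ext ω
    simp +contextual only [mem_inter_iff, mem_preimage, mem_Ioi, mul_pos_iff_of_pos_left,
      and_congr_right_iff, implies_true]

lemma ProbabilityTheory.IndepFun.aemeasurable_right_of_measure_pos (h : IndepFun X Y μ)
    (hXY : AEMeasurable (fun ω => X ω * Y ω) μ) (hY : AEMeasurable (fun ω => |Y ω|) μ)
    (hX : μ (X ⁻¹' Ioi 0) ≠ 0) : AEMeasurable Y μ := by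
  have hpos := h.nullMeasurableSet_pos_of_mul hXY hX
  have hneg : NullMeasurableSet ((-Y) ⁻¹' Ioi 0) μ :=
    (h.comp measurable_id measurable_neg).nullMeasurableSet_pos_of_mul
      (by simpa [Function.comp_def] using hXY) hX
  have hY_eq : Y = (Y ⁻¹' Ioi 0).indicator (fun ω => |Y ω|)
      - ((-Y) ⁻¹' Ioi 0).indicator (fun ω => |Y ω|) := by
    ext ω
    rcases lt_trichotomy (Y ω) 0 with hω | hω | hω <;>
      simp [indicator, hω, abs_of_neg, abs_of_pos, not_lt_of_gt]
  rw [hY_eq]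
  exact (hY.indicator₀ hpos).sub (hY.indicator₀ hneg)

lemma ProbabilityTheory.IndepFun.aemeasurable_right_of_mul (h : IndepFun X Y μ)
    (hXY : AEMeasurable (fun ω => X ω * Y ω) μ) (hY : AEMeasurable (fun ω => |Y ω|) μ)
    (hX : ¬ X =ᵐ[μ] 0) : AEMeasurable Y μ := by
  have hsign : μ (X ⁻¹' Ioi 0) ≠ 0 ∨ μ ((-X) ⁻¹' Ioi 0) ≠ 0 := by
    contrapose! hX
    refine measure_mono_null (fun ω hω => ?_) (measure_union_null hX.1 hX.2)
    rcases lt_or_gt_of_ne hω with hneg | hpos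
    · exact Or.inr (neg_pos.2 hneg)
    · exact Or.inl hpos
  rcases hsign with hpos | hneg
  · exact h.aemeasurable_right_of_measure_pos hXY hY hpos
  · exact (h.comp measurable_neg measurable_id).aemeasurable_right_of_measure_pos
      (by simpa [Function.comp_def] using hXY) hY hneg

lemma ProbabilityTheory.IndepFun.integral_fun_mul_eq_mul_integral_of_aemeasurable_abs
    (h : IndepFun X Y μ) (hXY : AEMeasurable (fun ω => X ω * Y ω) μ)
    (hX : AEMeasurable (fun ω => |X ω|) μ) (hY : AEMeasurable (fun ω => |Y ω|) μ) :
    ∫ ω, X ω * Y ω ∂μ = (∫ ω, X ω ∂μ) * ∫ ω, Y ω ∂μ := by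
  by_cases hX0 : X =ᵐ[μ] 0
  · have hXY0 : (fun ω => X ω * Y ω) =ᵐ[μ] 0 := by
      filter_upwards [hX0] with ω hω
      simp [hω]
    simp [integral_congr_ae hX0, integral_congr_ae hXY0]
  by_cases hY0 : Y =ᵐ[μ] 0
  · have hXY0 : (fun ω => X ω * Y ω) =ᵐ[μ] 0 := by
      filter_upwards [hY0] with ω hω
      simp [hω]
    simp [integral_congr_ae hY0, integral_congr_ae hXY0]
  have hYm := h.aemeasurable_right_of_mul hXY hY hX0
  have hXm := h.symm.aemeasurable_right_of_mul (by simpa only [mul_comm] using hXY) hX hY0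
  exact h.integral_fun_mul_eq_mul_integral hXm.aestronglyMeasurable hYm.aestronglyMeasurable

end

section Risk

variable {ι : Type*} [Fintype ι]

lemma hasFDerivAt_centered_quadratic (β : EuclideanSpace ℝ ι) (M : ι → ι → ℝ) (c : ι → ℝ)
    (K : ℝ) :
    HasFDerivAt (fun α : EuclideanSpace ℝ ι =>
        (1 / 2) * ∑ i, ∑ j, (α i - β i) * (α j - β j) * M i j - ∑ j, (α j - β j) * c j + K)
      (-∑ j, c j • EuclideanSpace.proj (𝕜 := ℝ) j) β := by
  have hcoord (i : ι) : HasFDerivAt (fun α : EuclideanSpace ℝ ι => α i - β i)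
      (EuclideanSpace.proj i : EuclideanSpace ℝ ι →L[ℝ] ℝ) β :=
    (EuclideanSpace.proj (𝕜 := ℝ) i).hasFDerivAt.sub_const (β i)
  have hquad : HasFDerivAt (fun α : EuclideanSpace ℝ ι =>
      (1 / 2) * ∑ i, ∑ j, (α i - β i) * (α j - β j) * M i j)
      (0 : EuclideanSpace ℝ ι →L[ℝ] ℝ) β := by
    simpa using (HasFDerivAt.fun_sum fun i _ => HasFDerivAt.fun_sum fun j _ =>
      ((hcoord i).mul (hcoord j)).mul_const (M i j)).const_mul (1 / 2 : ℝ)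
  have hlin : HasFDerivAt (fun α : EuclideanSpace ℝ ι => ∑ j, (α j - β j) * c j)
      (∑ j, c j • EuclideanSpace.proj (𝕜 := ℝ) j) β := by
    simpa using HasFDerivAt.fun_sum fun j _ => (hcoord j).mul_const (c j)
  simpa using (hquad.sub hlin).add_const K

variable {Ω : Type*} [MeasurableSpace Ω] {μ : Measure Ω}

noncomputable def squaredRisk (μ : Measure Ω) (x : Ω → EuclideanSpace ℝ ι) (y : Ω → ℝ)
    (α : EuclideanSpace ℝ ι) : ℝ :=
  ∫ ω, (1 / 2) * ((∑ j, α j * x ω j) - y ω) ^ 2 ∂μ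

variable {x : Ω → EuclideanSpace ℝ ι} {ε : Ω → ℝ}

lemma squaredRisk_linear_model (hxx : ∀ i j, Integrable (fun ω => x ω i * x ω j) μ)
    (hxε : ∀ j, Integrable (fun ω => x ω j * ε ω) μ) (hε : Integrable (fun ω => ε ω ^ 2) μ)
    (β α : EuclideanSpace ℝ ι) :
    squaredRisk μ x (fun ω => (∑ j, β j * x ω j) + ε ω) α =
      (1 / 2) * ∑ i, ∑ j, (α i - β i) * (α j - β j) * ∫ ω, x ω i * x ω j ∂μ
        - ∑ j, (α j - β j) * ∫ ω, x ω j * ε ω ∂μ + (1 / 2) * ∫ ω, ε ω ^ 2 ∂μ := by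
  have hpoint (ω : Ω) : (1 / 2) * ((∑ j, α j * x ω j) - ((∑ j, β j * x ω j) + ε ω)) ^ 2 =
      (1 / 2) * ∑ i, ∑ j, (α i - β i) * (α j - β j) * (x ω i * x ω j)
        - ∑ j, (α j - β j) * (x ω j * ε ω) + (1 / 2) * ε ω ^ 2 := by
    have hres : (∑ j, α j * x ω j) - ((∑ j, β j * x ω j) + ε ω)
        = (∑ j, (α j - β j) * x ω j) - ε ω := by
      simp only [sub_mul, Finset.sum_sub_distrib]
      ring
    have hsq : (∑ j, (α j - β j) * x ω j) ^ 2
        = ∑ i, ∑ j, (α i - β i) * (α j - β j) * (x ω i * x ω j) := by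
      rw [sq, Finset.sum_mul_sum]
      simp only [mul_mul_mul_comm]
    have hcross : (∑ j, (α j - β j) * x ω j) * ε ω = ∑ j, (α j - β j) * (x ω j * ε ω) := by
      simp only [Finset.sum_mul, mul_assoc]
    rw [hres]
    linear_combination (1 / 2 : ℝ) * hsq - hcross
  simp only [squaredRisk, hpoint]
  rw [integral_add, integral_sub, integral_const_mul, integral_const_mul, integral_finsetSum,
    integral_finsetSum]
  · simp only [integral_finsetSum _ fun j _ => (hxx _ j).const_mul _, integral_const_mul]
  all_goals fun_prop

lemma gradient_squaredRisk_linear_model_apply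
    (hxx : ∀ i j, Integrable (fun ω => x ω i * x ω j) μ)
    (hxε : ∀ j, Integrable (fun ω => x ω j * ε ω) μ) (hε : Integrable (fun ω => ε ω ^ 2) μ)
    (β : EuclideanSpace ℝ ι) (j : ι) :
    gradient (squaredRisk μ x (fun ω => (∑ j, β j * x ω j) + ε ω)) β j
      = -∫ ω, x ω j * ε ω ∂μ := by
  classical
  have hderiv := hasFDerivAt_centered_quadratic β (fun i j => ∫ ω, x ω i * x ω j ∂μ)
    (fun j => ∫ ω, x ω j * ε ω ∂μ) ((1 / 2) * ∫ ω, ε ω ^ 2 ∂μ)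
  rw [← funext (squaredRisk_linear_model hxx hxε hε β)] at hderiv
  set F := squaredRisk μ x (fun ω => (∑ j, β j * x ω j) + ε ω)
  calc gradient F β j = fderiv ℝ F β (EuclideanSpace.single j 1) := by
        rw [← inner_gradient_left, EuclideanSpace.inner_single_right, one_mul, conj_trivial]
    _ = -∫ ω, x ω j * ε ω ∂μ := by simp [hderiv.fderiv]

end Risk

theorem coco_causal_zero_general {p : ℕ} {Ω : Type*} [MeasurableSpace Ω]
    (μ : Measure Ω) [IsProbabilityMeasure μ]
    (x : Ω → EuclideanSpace ℝ (Fin p)) (ε : Ω → ℝ)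
    (β : EuclideanSpace ℝ (Fin p))
    (S : Finset (Fin p)) (hS : ∀ j, j ∈ S ↔ β j ≠ 0)
    (hε : ∫ ω, ε ω ∂μ = 0)
    (hindep : IndepFun (fun ω => fun j : S => x ω j) ε μ)
    (hintxx : ∀ i j, Integrable (fun ω => x ω i * x ω j) μ)
    (hintxε : ∀ j, Integrable (fun ω => x ω j * ε ω) μ)
    (hintε : Integrable (fun ω => ε ω ^ 2) μ)
    (y : Ω → ℝ) (hy : ∀ ω, y ω = (∑ j, β j * x ω j) + ε ω)
    (R : EuclideanSpace ℝ (Fin p) → ℝ)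
    (hR : ∀ α, R α = ∫ ω, (1 / 2) * ((∑ j, α j * x ω j) - y ω) ^ 2 ∂μ) :
    Real.sqrt (∑ j, (gradient R β j * β j) ^ 2) = 0 ∧
    ∀ α : EuclideanSpace ℝ (Fin p),
      Real.sqrt (∑ j, (gradient R β j * β j) ^ 2) ≤
        Real.sqrt (∑ j, (gradient R α j * α j) ^ 2) := by
  obtain rfl : y = fun ω => (∑ j, β j * x ω j) + ε ω := funext hy
  have hR_eq : R = squaredRisk μ x _ := funext hR
  have hε_abs : AEMeasurable (fun ω => |ε ω|) μ := by
    simpa only [Real.sqrt_sq_eq_abs] using hintε.aemeasurable.sqrt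
  have hxε_zero (j : Fin p) (hj : j ∈ S) : ∫ ω, x ω j * ε ω ∂μ = 0 := by
    have hx_abs : AEMeasurable (fun ω => |x ω j|) μ := by
      simpa only [Real.sqrt_mul_self_eq_abs] using (hintxx j j).aemeasurable.sqrt
    have hind : IndepFun (fun ω => x ω j) ε μ :=
      hindep.comp (measurable_pi_apply (⟨j, hj⟩ : S)) measurable_id
    rw [hind.integral_fun_mul_eq_mul_integral_of_aemeasurable_abs (hintxε j).aemeasurable hx_abs
      hε_abs, hε, mul_zero]
  have hterm (j : Fin p) : gradient R β j * β j = 0 := by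
    by_cases hj : j ∈ S
    · rw [hR_eq, gradient_squaredRisk_linear_model_apply hintxx hintxε hintε, hxε_zero j hj,
        neg_zero, zero_mul]
    · rw [not_not.1 (mt (hS j).2 hj), mul_zero]
  have hzero : Real.sqrt (∑ j, (gradient R β j * β j) ^ 2) = 0 := by
    simp [hterm]
  exact ⟨hzero, fun α => hzero ▸ Real.sqrt_nonneg _⟩

/-- Under the linear SEM `y = βᵀx + ε` with `E[ε]=0`, `x_S ⊥ ε` (`S` the
support of `β`) and `W = E[x xᵀ]` positive definite, the causal coefficient `β`
satisfies `‖∇R(β) ∘ β‖₂ = 0` for the squared risk `R`, and in particular `β` is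
a global minimizer of `α ↦ ‖∇R(α) ∘ α‖₂`. -/
theorem coco_causal_zero {p : ℕ} {Ω : Type*} [MeasurableSpace Ω]
    (μ : Measure Ω) [IsProbabilityMeasure μ]
    (x : Ω → EuclideanSpace ℝ (Fin p)) (ε : Ω → ℝ)
    (β : EuclideanSpace ℝ (Fin p))
    (S : Finset (Fin p)) (hS : ∀ j, j ∈ S ↔ β j ≠ 0)
    (W : Matrix (Fin p) (Fin p) ℝ)
    (hW : ∀ i j, W i j = ∫ ω, x ω i * x ω j ∂μ)
    (hWpd : W.PosDef)
    (hε : ∫ ω, ε ω ∂μ = 0)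
    (hindep : IndepFun (fun ω => fun j : S => x ω j) ε μ)
    (hintxx : ∀ i j, Integrable (fun ω => x ω i * x ω j) μ)
    (hintxε : ∀ j, Integrable (fun ω => x ω j * ε ω) μ)
    (hintε : Integrable (fun ω => ε ω ^ 2) μ)
    (y : Ω → ℝ) (hy : ∀ ω, y ω = (∑ j, β j * x ω j) + ε ω)
    (R : EuclideanSpace ℝ (Fin p) → ℝ)
    (hR : ∀ α, R α = ∫ ω, (1 / 2) * ((∑ j, α j * x ω j) - y ω) ^ 2 ∂μ) :
    Real.sqrt (∑ j, (gradient R β j * β j) ^ 2) = 0 ∧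
    ∀ α : EuclideanSpace ℝ (Fin p),
      Real.sqrt (∑ j, (gradient R β j * β j) ^ 2) ≤
        Real.sqrt (∑ j, (gradient R α j * α j) ^ 2) :=
  coco_causal_zero_general μ x ε β S hS hε hindep hintxx hintxε hintε y hy R hR
end

section
/- Suppose for each environment e ∈ E the matrix W^e_{CP} (rows of the Gram matrix W^e indexed by the known nondescendant set C, all columns) is stacked into W^E_{CP}, and suppose the homogeneous linear system W^E_{CP} v = 0 has only the trivial solution v = 0. Then the weak effectiveness assumption (A2') holds: for every H ≠ S with C ⊆ H ⊆ {1,…,p}, there is no nonzero δ with W^e_{HH} δ = W^e_{HH^c} β_{H^c} + s^e_H for all e ∈ E. -/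
open MeasureTheory

/-! Given a nonzero `δ` violating (A2') on `H`, the vector `v` equal to `δ` on `H` and to `-β` on
`Hᶜ` satisfies `(W^e v)_i = (W^e_{HH} δ)_i - (W^e_{HH^c} β_{H^c})_i = s^e_i` for `i ∈ H`. Since
`C ⊆ H` and `s^e_C = 0`, this gives `W^E_{CP} v = 0`, so `v = 0` and hence `δ = 0`. -/

namespace Finset

variable {n R : Type*} [DecidableEq n]

theorem sum_mul_piecewise [Fintype n] [NonUnitalNonAssocSemiring R]
    (H : Finset n) (a f g : n → R) :
    ∑ j, a j * H.piecewise f g j = ∑ j ∈ H, a j * f j + ∑ j ∈ Hᶜ, a j * g j := by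
  rw [← sum_add_sum_compl H]
  congr 1 <;> refine sum_congr rfl fun j hj => ?_
  · rw [piecewise_eq_of_mem H f g hj]
  · rw [piecewise_eq_of_notMem H f g (mem_compl.mp hj)]

theorem eq_zero_of_piecewise_eq_zero [Zero R] {H : Finset n} {f g : n → R}
    (hf : ∀ j ∉ H, f j = 0) (h : H.piecewise f g = 0) : f = 0 := by
  funext j
  by_cases hj : j ∈ H
  · simpa [hj] using congrFun h j
  · exact hf j hj

end Finset

theorem checking_implies_weak_effectiveness_general {p : ℕ} {ι : Type*}
    (E : Finset ι)
    (β : Fin p → ℝ) (S C : Finset (Fin p))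
    (W : ι → Matrix (Fin p) (Fin p) ℝ)
    (s : ι → Fin p → ℝ)
    (hsC : ∀ e ∈ E, ∀ j ∈ C, s e j = 0)
    (hrank : ∀ v : Fin p → ℝ,
      (∀ e ∈ E, ∀ i ∈ C, ∑ j, W e i j * v j = 0) → v = 0) :
    ∀ H : Finset (Fin p), H ≠ S → C ⊆ H →
      ¬ ∃ δ : Fin p → ℝ, δ ≠ 0 ∧ (∀ j ∉ H, δ j = 0) ∧
        ∀ e ∈ E, ∀ i ∈ H,
          ∑ k ∈ H, W e i k * δ k = (∑ k ∈ Hᶜ, W e i k * β k) + s e i := by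
  rintro H - hCH ⟨δ, hδ, hδH, hδW⟩
  refine hδ (Finset.eq_zero_of_piecewise_eq_zero (g := -β) hδH (hrank _ fun e he i hi => ?_))
  rw [Finset.sum_mul_piecewise, hδW e he i (hCH hi), hsC e he i hi]
  simp only [Pi.neg_apply, mul_neg, Finset.sum_neg_distrib]
  ring

/-- Proposition (checking): if the stacked homogeneous linear system
`W^E_{CP} v = 0` (rows of each Gram matrix indexed by the known nondescendant
set `C`, stacked over environments) has only the trivial solution, then weak
effectiveness (A2') holds: for every `H ≠ S` with `C ⊆ H`, there is no nonzero
`δ` supported on `H` with `W^e_{HH} δ = W^e_{HH^c} β_{H^c} + s^e_H` for all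
`e ∈ E`. -/
theorem checking_implies_weak_effectiveness {p : ℕ} {ι : Type*} {Ω : Type*}
    [MeasurableSpace Ω]
    (μ : ι → Measure Ω) [∀ e, IsProbabilityMeasure (μ e)]
    (E : Finset ι) (x : ι → Ω → Fin p → ℝ) (ε : ι → Ω → ℝ)
    (β : Fin p → ℝ) (S C : Finset (Fin p))
    (hS : ∀ j, j ∈ S ↔ β j ≠ 0)
    (W : ι → Matrix (Fin p) (Fin p) ℝ)
    (hW : ∀ e i j, W e i j = ∫ ω, x e ω i * x e ω j ∂(μ e))
    (s : ι → Fin p → ℝ)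
    (hs : ∀ e j, s e j = ∫ ω, x e ω j * ε e ω ∂(μ e))
    (hsC : ∀ e ∈ E, ∀ j ∈ C, s e j = 0)
    (hrank : ∀ v : Fin p → ℝ,
      (∀ e ∈ E, ∀ i ∈ C, ∑ j, W e i j * v j = 0) → v = 0) :
    ∀ H : Finset (Fin p), H ≠ S → C ⊆ H →
      ¬ ∃ δ : Fin p → ℝ, δ ≠ 0 ∧ (∀ j ∉ H, δ j = 0) ∧
        ∀ e ∈ E, ∀ i ∈ H,
          ∑ k ∈ H, W e i k * δ k = (∑ k ∈ Hᶜ, W e i k * β k) + s e i :=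
  checking_implies_weak_effectiveness_general E β S C W s hsC hrank
end

section
/- Suppose that under environments indexed by e ∈ E, the covariates in C satisfy E[x^e_j ε^e] = 0 for all j ∈ C, and that the stacked matrix W^E_{CP} has full column rank p. Then any α with ∇R^e(α)_C = 0 for all e ∈ E and ∇R^e(α)_j α_j = 0 for all j and all e must satisfy α = β, i.e., the causal coefficient is the unique solution of the CoCo first-order conditions. -/
open MeasureTheory

theorem eq_of_forall_rows_sum_mul_sub_eq_zero {R ι n : Type*} [Ring R] [Fintype n]
    (E : Finset ι) (C : Finset n) (W : ι → Matrix n n R)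
    (hrank : ∀ v : n → R, (∀ e ∈ E, ∀ i ∈ C, ∑ j, W e i j * v j = 0) → v = 0)
    {α β : n → R} (h : ∀ e ∈ E, ∀ i ∈ C, ∑ j, W e i j * (α j - β j) = 0) :
    α = β :=
  sub_eq_zero.mp (hrank (α - β) h)

theorem coco_first_order_unique_general {p : ℕ} {ι : Type*}
    (E : Finset ι)
    (β : Fin p → ℝ) (C : Finset (Fin p))
    (W : ι → Matrix (Fin p) (Fin p) ℝ)
    (s : ι → Fin p → ℝ)
    (hsC : ∀ e ∈ E, ∀ j ∈ C, s e j = 0)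
    (g : ι → (Fin p → ℝ) → Fin p → ℝ)
    (hg : ∀ (e : ι) (α : Fin p → ℝ) (j : Fin p),
      g e α j = (∑ k, W e j k * (α k - β k)) - s e j)
    (hrank : ∀ v : Fin p → ℝ,
      (∀ e ∈ E, ∀ i ∈ C, ∑ j, W e i j * v j = 0) → v = 0)
    (α : Fin p → ℝ)
    (hC : ∀ e ∈ E, ∀ i ∈ C, g e α i = 0) :
    α = β := by
  refine eq_of_forall_rows_sum_mul_sub_eq_zero E C W hrank fun e he i hi => ?_
  simpa only [hg, hsC e he i hi, sub_zero] using hC e he i hi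

/-- Uniqueness of the CoCo first-order solution: in the linear SEM
`y^e = βᵀx^e + ε^e` with gradients `∇R^e(α) = W^e(α − β) − s^e`, if the
nondescendant set `C` satisfies `s^e_C = 0` and the stacked matrix `W^E_{CP}`
has full column rank (trivial kernel), then any `α` with `∇R^e(α)_C = 0` for
all `e ∈ E` and `∇R^e(α)_j α_j = 0` for all `j, e` must equal `β`. -/
theorem coco_first_order_unique {p : ℕ} {ι : Type*} {Ω : Type*}
    [MeasurableSpace Ω]
    (μ : ι → Measure Ω) [∀ e, IsProbabilityMeasure (μ e)]
    (E : Finset ι) (x : ι → Ω → Fin p → ℝ) (ε : ι → Ω → ℝ)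
    (β : Fin p → ℝ) (C : Finset (Fin p))
    (W : ι → Matrix (Fin p) (Fin p) ℝ)
    (hW : ∀ e i j, W e i j = ∫ ω, x e ω i * x e ω j ∂(μ e))
    (hWpd : ∀ e ∈ E, (W e).PosDef)
    (s : ι → Fin p → ℝ)
    (hs : ∀ e j, s e j = ∫ ω, x e ω j * ε e ω ∂(μ e))
    (hsC : ∀ e ∈ E, ∀ j ∈ C, s e j = 0)
    (g : ι → (Fin p → ℝ) → Fin p → ℝ)
    (hg : ∀ (e : ι) (α : Fin p → ℝ) (j : Fin p),
      g e α j = (∑ k, W e j k * (α k - β k)) - s e j)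
    (hrank : ∀ v : Fin p → ℝ,
      (∀ e ∈ E, ∀ i ∈ C, ∑ j, W e i j * v j = 0) → v = 0)
    (α : Fin p → ℝ)
    (hC : ∀ e ∈ E, ∀ i ∈ C, g e α i = 0)
    (hHad : ∀ e ∈ E, ∀ j, g e α j * α j = 0) :
    α = β :=
  coco_first_order_unique_general E β C W s hsC g hg hrank α hC
end

section
/- Consider environments e with covariates (x₁^e, x₂^e, z₁^e, z₂^e) generated by: x₁^e, x₂^e, ε₁^e, ε₂^e i.i.d. N(0, v^e) (mutually independent), y^e = x₁^e + x₂^e + ε₁^e + ε₂^e, z_i^e = x_i^e + ε_i^e + N(0,1) (independent extra noise). For the squared risk R^e(α) = E[(1/2)(α₁x₁^e + α₂x₂^e + α₃z₁^e + α₄z₂^e − y^e)²], the unique minimizer over α ∈ R⁴ is α = (1/(1+v^e), 1/(1+v^e), v^e/(1+v^e), v^e/(1+v^e)), and the minimizer of the averaged risk over K environments with variances v^{e₁},…,v^{e_K} is (K/(K+Σv^e), K/(K+Σv^e), Σv^e/(K+Σv^e), Σv^e/(K+Σv^e)). -/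
/-!
Write `x₁, x₂, ε₁, ε₂, η₁, η₂` for the coordinates `ω 0, …, ω 5`. The residual of the predictor
`α` is the linear form `(α₁+α₃-1) x₁ + (α₂+α₄-1) x₂ + (α₃-1) ε₁ + (α₄-1) ε₂ + α₃ η₁ + α₄ η₂` in
six independent centred Gaussians, so its second moment is the variance-weighted sum of the squared
coefficients. The risk therefore splits into two copies of the quadratic
`S (x+y-1)² + S (y-1)² + K y²` with `(S, K) = (vᵉ, 1)`; it is linear in `(S, K)`, so the summed
risk is the same quadratic with `(S, K) = (Σ vᵉ, K)`. Completing the square, the quadratic equals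
its value at `(K/(K+S), S/(K+S))` plus `S (x+y-1)² + (K+S) (y - S/(K+S))²`, which vanishes only at
that point.
-/

open MeasureTheory ProbabilityTheory

open scoped NNReal

section CenteredPi

variable {ι : Type*} [Fintype ι] {μ : ι → Measure ℝ} [∀ i, IsProbabilityMeasure (μ i)]

lemma integral_sq_sum_mul_pi (hμ : ∀ i, MemLp id 2 (μ i)) (hμ₀ : ∀ i, ∫ x, x ∂μ i = 0)
    (c : ι → ℝ) :
    ∫ ω, (∑ i, c i * ω i) ^ 2 ∂Measure.pi μ = ∑ i, c i ^ 2 * Var[fun x ↦ x; μ i] := by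
  have hmean : ∫ ω, ∑ i, c i * ω i ∂Measure.pi μ = 0 := by
    rw [integral_finsetSum _ fun i _ ↦
      (integrable_eval ((hμ i).integrable one_le_two)).const_mul _]
    refine Finset.sum_eq_zero fun i _ ↦ ?_
    rw [integral_const_mul, integral_comp_eval (X := fun _ ↦ ℝ) (μ := μ) (f := fun x ↦ x)
      aestronglyMeasurable_id, hμ₀, mul_zero]
  have hvar := variance_sum_pi (μ := μ) (X := fun i x ↦ c i * x) fun i ↦ (hμ i).const_mul (c i)
  rw [← variance_of_integral_eq_zero (Measurable.aemeasurable (by fun_prop)) hmean]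
  convert hvar using 2 with i
  · ext ω
    simp
  · rw [variance_const_mul]

end CenteredPi

lemma integral_sq_sum_mul_gaussianReal_pi {ι : Type*} [Fintype ι] (v : ι → ℝ≥0) (c : ι → ℝ) :
    ∫ ω, (∑ i, c i * ω i) ^ 2 ∂Measure.pi (fun i ↦ gaussianReal 0 (v i))
      = ∑ i, c i ^ 2 * v i := by
  rw [integral_sq_sum_mul_pi (fun i ↦ memLp_id_gaussianReal 2) fun i ↦ integral_id_gaussianReal]
  simp

def pairRisk (S K x y : ℝ) : ℝ := S * (x + y - 1) ^ 2 + S * (y - 1) ^ 2 + K * y ^ 2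

lemma pairRisk_eq_pairRisk_opt_add {S K : ℝ} (h : K + S ≠ 0) (x y : ℝ) :
    pairRisk S K x y = pairRisk S K (K / (K + S)) (S / (K + S))
      + (S * (x + y - 1) ^ 2 + (K + S) * (y - S / (K + S)) ^ 2) := by
  unfold pairRisk
  field_simp
  ring

lemma pairRisk_opt_le {S K : ℝ} (hS : 0 ≤ S) (hKS : 0 < K + S) (x y : ℝ) :
    pairRisk S K (K / (K + S)) (S / (K + S)) ≤ pairRisk S K x y := by
  rw [pairRisk_eq_pairRisk_opt_add hKS.ne' x y, le_add_iff_nonneg_right]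
  have := hKS.le
  positivity

lemma pairRisk_opt_lt {S K : ℝ} (hS : 0 < S) (hKS : 0 < K + S) {x y : ℝ}
    (h : (x, y) ≠ (K / (K + S), S / (K + S))) :
    pairRisk S K (K / (K + S)) (S / (K + S)) < pairRisk S K x y := by
  rw [pairRisk_eq_pairRisk_opt_add hKS.ne' x y, lt_add_iff_pos_right]
  by_cases hy : y = S / (K + S)
  · have hx : x + y - 1 ≠ 0 := by
      contrapose! h
      rw [hy] at h ⊢
      refine Prod.ext ?_ rfl
      field_simp at h ⊢
      linarith
    positivity
  · have : y - S / (K + S) ≠ 0 := sub_ne_zero.mpr hy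
    positivity

noncomputable def ermRisk (S K : ℝ) (α : Fin 4 → ℝ) : ℝ :=
  (pairRisk S K (α 0) (α 2) + pairRisk S K (α 1) (α 3)) / 2

noncomputable def ermOpt (S K : ℝ) : Fin 4 → ℝ :=
  fun i ↦ if (i : ℕ) < 2 then K / (K + S) else S / (K + S)

lemma ermRisk_opt_lt {S K : ℝ} (hS : 0 < S) (hKS : 0 < K + S) {α : Fin 4 → ℝ}
    (h : α ≠ ermOpt S K) : ermRisk S K (ermOpt S K) < ermRisk S K α := by
  have hpairs : (α 0, α 2) ≠ (K / (K + S), S / (K + S)) ∨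
      (α 1, α 3) ≠ (K / (K + S), S / (K + S)) := by
    contrapose! h
    obtain ⟨h02, h13⟩ := h
    simp only [Prod.ext_iff] at h02 h13
    ext i
    fin_cases i <;> simp [ermOpt, h02, h13]
  have hopt : ermRisk S K (ermOpt S K) = (pairRisk S K (K / (K + S)) (S / (K + S))
      + pairRisk S K (K / (K + S)) (S / (K + S))) / 2 := rfl
  rw [hopt, ermRisk]
  have h02 := pairRisk_opt_le hS.le hKS (α 0) (α 2)
  have h13 := pairRisk_opt_le hS.le hKS (α 1) (α 3)
  rcases hpairs with h | h <;> linarith [pairRisk_opt_lt hS hKS h]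

lemma ermRisk_eq_mul_add_mul (S K : ℝ) (α : Fin 4 → ℝ) :
    ermRisk S K α = S * ermRisk 1 0 α + K * ermRisk 0 1 α := by
  unfold ermRisk pairRisk
  ring

lemma sum_ermRisk {E : Type*} (s : Finset E) (S K : E → ℝ) (α : Fin 4 → ℝ) :
    ∑ e ∈ s, ermRisk (S e) (K e) α = ermRisk (∑ e ∈ s, S e) (∑ e ∈ s, K e) α := by
  rw [Finset.sum_congr rfl fun e _ ↦ ermRisk_eq_mul_add_mul (S e) (K e) α,
    Finset.sum_add_distrib, ← Finset.sum_mul, ← Finset.sum_mul, ← ermRisk_eq_mul_add_mul]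

lemma integral_half_sq_residual_eq_ermRisk (w : ℝ≥0) (α : Fin 4 → ℝ) :
    ∫ ω, (1 / 2) * (α 0 * ω 0 + α 1 * ω 1
          + α 2 * (ω 0 + ω 2 + ω 4) + α 3 * (ω 1 + ω 3 + ω 5)
          - (ω 0 + ω 1 + ω 2 + ω 3)) ^ 2
        ∂Measure.pi (fun i : Fin 6 ↦ if (i : ℕ) < 4 then gaussianReal 0 w else gaussianReal 0 1)
      = ermRisk w 1 α := by
  have hμ : (fun i : Fin 6 ↦ if (i : ℕ) < 4 then gaussianReal 0 w else gaussianReal 0 1)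
      = fun i : Fin 6 ↦ gaussianReal 0 (if (i : ℕ) < 4 then w else 1) := by
    ext1 i
    split_ifs <;> rfl
  have hres : ∀ ω : Fin 6 → ℝ, α 0 * ω 0 + α 1 * ω 1
        + α 2 * (ω 0 + ω 2 + ω 4) + α 3 * (ω 1 + ω 3 + ω 5) - (ω 0 + ω 1 + ω 2 + ω 3)
      = ∑ i, ![α 0 + α 2 - 1, α 1 + α 3 - 1, α 2 - 1, α 3 - 1, α 2, α 3] i * ω i := by
    intro ω
    simp only [Fin.sum_univ_six, Matrix.cons_val_zero, Matrix.cons_val_one, Matrix.cons_val]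
    ring
  simp_rw [hres, hμ, integral_const_mul, integral_sq_sum_mul_gaussianReal_pi]
  simp only [Fin.sum_univ_six, Matrix.cons_val_zero, Matrix.cons_val_one, Matrix.cons_val,
    Fin.coe_ofNat_eq_mod, Nat.reduceMod, Nat.reduceLT, ↓reduceIte, NNReal.coe_one, ermRisk, pairRisk]
  ring

/-- The worked Gaussian example (Appendix B.1): with
`x₁, x₂, ε₁, ε₂ ~ N(0, vᵉ)` independent, `y = x₁ + x₂ + ε₁ + ε₂` and
`zᵢ = xᵢ + εᵢ + N(0,1)`, the squared risk of the linear predictor on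
`(x₁, x₂, z₁, z₂)` is uniquely minimized at
`(1/(1+vᵉ), 1/(1+vᵉ), vᵉ/(1+vᵉ), vᵉ/(1+vᵉ))`, and the averaged (summed) risk
over `K` environments is uniquely minimized at
`(K/(K+Σvᵉ), K/(K+Σvᵉ), Σvᵉ/(K+Σvᵉ), Σvᵉ/(K+Σvᵉ))`. -/
theorem erm_gaussian_example {K : ℕ} (hK : 0 < K)
    (v : Fin K → NNReal) (hv : ∀ e, 0 < v e)
    (meas : NNReal → Measure (Fin 6 → ℝ))
    (hmeas : ∀ w, meas w = Measure.pi
      (fun i : Fin 6 => if (i : ℕ) < 4 then gaussianReal 0 w else gaussianReal 0 1))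
    (R : NNReal → (Fin 4 → ℝ) → ℝ)
    (hR : ∀ (w : NNReal) (α : Fin 4 → ℝ), R w α =
      ∫ ω, (1 / 2) * (α 0 * ω 0 + α 1 * ω 1
          + α 2 * (ω 0 + ω 2 + ω 4) + α 3 * (ω 1 + ω 3 + ω 5)
          - (ω 0 + ω 1 + ω 2 + ω 3)) ^ 2 ∂(meas w)) :
    (∀ (e : Fin K) (α : Fin 4 → ℝ),
      α ≠ (fun i : Fin 4 => if (i : ℕ) < 2 then 1 / (1 + (v e : ℝ))
            else (v e : ℝ) / (1 + (v e : ℝ))) →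
      R (v e) (fun i => if (i : ℕ) < 2 then 1 / (1 + (v e : ℝ))
            else (v e : ℝ) / (1 + (v e : ℝ))) < R (v e) α) ∧
    (∀ α : Fin 4 → ℝ,
      α ≠ (fun i : Fin 4 => if (i : ℕ) < 2 then (K : ℝ) / ((K : ℝ) + ∑ e, (v e : ℝ))
            else (∑ e, (v e : ℝ)) / ((K : ℝ) + ∑ e, (v e : ℝ))) →
      (∑ e, R (v e) (fun i => if (i : ℕ) < 2 then (K : ℝ) / ((K : ℝ) + ∑ e, (v e : ℝ))
            else (∑ e, (v e : ℝ)) / ((K : ℝ) + ∑ e, (v e : ℝ))))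
        < ∑ e, R (v e) α) := by
  have hRisk : ∀ w α, R w α = ermRisk w 1 α := fun w α ↦ by
    rw [hR, hmeas, integral_half_sq_residual_eq_ermRisk]
  have hSum : ∀ α, ∑ e, R (v e) α = ermRisk (∑ e, (v e : ℝ)) K α := fun α ↦ by
    simp only [hRisk, sum_ermRisk, Finset.sum_const, Finset.card_univ, Fintype.card_fin,
      nsmul_eq_mul, mul_one]
  have hS : 0 < ∑ e, (v e : ℝ) :=
    Finset.sum_pos (fun e _ ↦ NNReal.coe_pos.2 (hv e)) ⟨⟨0, hK⟩, Finset.mem_univ _⟩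
  refine ⟨fun e α hα ↦ ?_, fun α hα ↦ ?_⟩
  · rw [hRisk, hRisk]
    exact ermRisk_opt_lt (NNReal.coe_pos.2 (hv e)) (by positivity) hα
  · rw [hSum, hSum]
    exact ermRisk_opt_lt hS (by positivity) hα
end
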